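/- Let k, n be nonnegative integers with k ≤ n and let 0 < p < 1. Then k + 1 - B_{n,k}(p)/b_{n,k}(p) ≤ μ_{n,k}(p) ≤ p·n, where the lower bound is attained if and only if k = 0 and the upper bound is attained if and only if k = n. -/

import Mathlib

open Real

/-- Binomial probability `b_{n,k}(p)`. -/
noncomputable def b (n k : ℕ) (p : ℝ) : ℝ :=
  (n.choose k : ℝ) * p ^ k * (1 - p) ^ (n - k)

/-- Lower tail probability `B_{n,k}(p)`. -/
noncomputable def B (n k : ℕ) (p : ℝ) : ℝ :=
  ∑ j ∈ Finset.range (k + 1), (n.choose j : ℝ) * p ^ j * (1 - p) ^ (n - j)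

/-- Partial mean `μ_{n,k}(p) = ∑_{j=0}^k j b_{n,j}(p) / B_{n,k}(p)`. -/
noncomputable def mu (n k : ℕ) (p : ℝ) : ℝ :=
  ∑ j ∈ Finset.range (k + 1), (j : ℝ) * b n j p / B n k p

/-! The upper bound comes from the telescoping identity
`∑_{j ≤ k} (j - n p) b_{n,j} = -(n - k) p b_{n,k}`, whose right side vanishes only at `k = n`.
For the lower bound, summation by parts gives `(k + 1) B_{n,k} - ∑_{j ≤ k} j b_{n,j} = ∑_{i ≤ k} B_{n,i}`,
so the claim reduces to `B_{n,i} b_{n,k} ≤ B_{n,k} b_{n,i}` for `i ≤ k`, with strict inequality at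
`i = 0 < k`. This holds because `i ↦ B_{n,i} / b_{n,i}` is strictly increasing, which is true of the
partial sums of any positive log-concave sequence. -/

open Finset

theorem sum_range_sum_range_succ {R : Type*} [CommRing R] (a : ℕ → R) (k : ℕ) :
    ∑ i ∈ range (k + 1), ∑ j ∈ range (i + 1), a j
      = (k + 1) * ∑ j ∈ range (k + 1), a j - ∑ j ∈ range (k + 1), (j : R) * a j := by
  induction k with
  | zero => simp
  | succ k ih =>
    rw [sum_range_succ (fun i => ∑ j ∈ range (i + 1), a j), ih, sum_range_succ a (k + 1),
      sum_range_succ (fun j => (j : R) * a j) (k + 1)]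
    push_cast
    ring

section LogConcave

variable {a : ℕ → ℝ} {n : ℕ}

-- `hlc` below says that `a` is log-concave on `[0, n]`: the ratios `a (i + 1) / a i` decrease.

theorem partialSum_mul_succ_lt (ha : ∀ i ≤ n, 0 < a i)
    (hlc : ∀ i j, j ≤ i → i < n → a (i + 1) * a j ≤ a (j + 1) * a i) {i : ℕ} (hi : i < n) :
    (∑ j ∈ range (i + 1), a j) * a (i + 1) < (∑ j ∈ range (i + 2), a j) * a i := by
  have hshift : (∑ j ∈ range (i + 2), a j) * a i
      = ∑ j ∈ range (i + 1), a (j + 1) * a i + a 0 * a i := by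
    rw [sum_range_succ', add_mul, sum_mul]
  have hterms : ∑ j ∈ range (i + 1), a j * a (i + 1) ≤ ∑ j ∈ range (i + 1), a (j + 1) * a i :=
    sum_le_sum fun j hj => (mul_comm _ _).trans_le (hlc i j (mem_range_succ_iff.mp hj) hi)
  have h0 : 0 < a 0 * a i := mul_pos (ha 0 (Nat.zero_le n)) (ha i hi.le)
  rw [hshift, sum_mul]
  linarith

theorem strictMonoOn_partialSum_div (ha : ∀ i ≤ n, 0 < a i)
    (hlc : ∀ i j, j ≤ i → i < n → a (i + 1) * a j ≤ a (j + 1) * a i) :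
    StrictMonoOn (fun i => (∑ j ∈ range (i + 1), a j) / a i) (Set.Iic n) :=
  strictMonoOn_Iic_of_lt_succ fun i hi => by
    rw [Order.succ_eq_add_one, div_lt_div_iff₀ (ha i hi.le) (ha (i + 1) hi)]
    exact partialSum_mul_succ_lt ha hlc hi

theorem partialSum_mul_le (ha : ∀ i ≤ n, 0 < a i)
    (hlc : ∀ i j, j ≤ i → i < n → a (i + 1) * a j ≤ a (j + 1) * a i) {i k : ℕ} (hik : i ≤ k)
    (hk : k ≤ n) :
    (∑ j ∈ range (i + 1), a j) * a k ≤ (∑ j ∈ range (k + 1), a j) * a i := by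
  rw [← div_le_div_iff₀ (ha i (hik.trans hk)) (ha k hk)]
  exact (strictMonoOn_partialSum_div ha hlc).monotoneOn (hik.trans hk) hk hik

theorem sum_partialSum_mul_sub_nonneg (ha : ∀ i ≤ n, 0 < a i)
    (hlc : ∀ i j, j ≤ i → i < n → a (i + 1) * a j ≤ a (j + 1) * a i) {k : ℕ} (hk : k ≤ n) :
    0 ≤ ∑ i ∈ range (k + 1),
      ((∑ j ∈ range (k + 1), a j) * a i - (∑ j ∈ range (i + 1), a j) * a k) :=
  sum_nonneg fun _ hi => sub_nonneg.mpr (partialSum_mul_le ha hlc (mem_range_succ_iff.mp hi) hk)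

theorem sum_partialSum_mul_sub_eq_zero_iff (ha : ∀ i ≤ n, 0 < a i)
    (hlc : ∀ i j, j ≤ i → i < n → a (i + 1) * a j ≤ a (j + 1) * a i) {k : ℕ} (hk : k ≤ n) :
    ∑ i ∈ range (k + 1),
      ((∑ j ∈ range (k + 1), a j) * a i - (∑ j ∈ range (i + 1), a j) * a k) = 0 ↔ k = 0 := by
  refine ⟨fun hzero => ?_, fun hk0 => by simp [hk0]⟩
  by_contra hk0
  have hfirst : (∑ j ∈ range 1, a j) * a k < (∑ j ∈ range (k + 1), a j) * a 0 := by
    rw [← div_lt_div_iff₀ (ha 0 (Nat.zero_le n)) (ha k hk)]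
    exact strictMonoOn_partialSum_div ha hlc (Nat.zero_le n) hk (Nat.pos_of_ne_zero hk0)
  refine (sum_pos' (fun i hi => ?_) ⟨0, by simp, sub_pos.mpr hfirst⟩).ne' hzero
  exact sub_nonneg.mpr (partialSum_mul_le ha hlc (mem_range_succ_iff.mp hi) hk)

end LogConcave

theorem B_eq_sum_b (n k : ℕ) (p : ℝ) : B n k p = ∑ j ∈ range (k + 1), b n j p := rfl

theorem mu_eq_div (n k : ℕ) (p : ℝ) :
    mu n k p = (∑ j ∈ range (k + 1), (j : ℝ) * b n j p) / B n k p := by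
  rw [mu, sum_div]

section Binomial

variable {n k : ℕ} {p : ℝ}

theorem b_pos (hk : k ≤ n) (hp0 : 0 < p) (hp1 : p < 1) : 0 < b n k p := by
  have := Nat.choose_pos hk
  have : 0 < 1 - p := sub_pos.mpr hp1
  unfold b
  positivity

theorem B_pos (hk : k ≤ n) (hp0 : 0 < p) (hp1 : p < 1) : 0 < B n k p :=
  sum_pos (fun _ hj => b_pos ((mem_range_succ_iff.mp hj).trans hk) hp0 hp1) nonempty_range_add_one

theorem succ_mul_b_succ (hk : k < n) (p : ℝ) :
    (k + 1) * (1 - p) * b n (k + 1) p = (n - k) * p * b n k p := by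
  have hchoose : (n.choose (k + 1) : ℝ) * (k + 1) = n.choose k * (n - k) := by
    have h := congrArg (Nat.cast (R := ℝ)) (Nat.choose_succ_right_eq n k)
    push_cast [Nat.cast_sub hk.le] at h
    exact h
  unfold b
  rw [show n - k = n - (k + 1) + 1 by omega, pow_succ]
  linear_combination (p ^ (k + 1) * (1 - p) ^ (n - (k + 1)) * (1 - p)) * hchoose

theorem b_succ_mul_le {i j : ℕ} (hji : j ≤ i) (hi : i < n) (hp0 : 0 < p) (hp1 : p < 1) :
    b n (i + 1) p * b n j p ≤ b n (j + 1) p * b n i p := by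
  have hq : 0 < 1 - p := sub_pos.mpr hp1
  have hbi := b_pos hi.le hp0 hp1
  have hbj := b_pos (hji.trans hi.le) hp0 hp1
  have hji' : (j : ℝ) ≤ i := by exact_mod_cast hji
  have hin : (i : ℝ) ≤ n := by exact_mod_cast hi.le
  have hpos : 0 < ((i : ℝ) + 1) * (1 - p) * ((j + 1) * (1 - p)) := by positivity
  rw [← mul_le_mul_iff_right₀ hpos]
  have hratio : ((n : ℝ) - i) * (j + 1) ≤ (n - j) * (i + 1) := by nlinarith
  have hc : 0 ≤ p * (1 - p) * (b n i p * b n j p) := by positivity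
  linear_combination ((j + 1) * (1 - p) * b n j p) * succ_mul_b_succ hi p
    - ((i + 1) * (1 - p) * b n i p) * succ_mul_b_succ (hji.trans_lt hi) p
    + mul_le_mul_of_nonneg_left hratio hc

theorem sum_sub_mul_b (hk : k ≤ n) (p : ℝ) :
    ∑ j ∈ range (k + 1), ((j : ℝ) - p * n) * b n j p = -((n - k) * p * b n k p) := by
  induction k with
  | zero => simp [mul_comm]
  | succ k ih =>
    rw [sum_range_succ, ih (by omega)]
    push_cast
    linear_combination succ_mul_b_succ hk p

theorem mul_sub_mu (hk : k ≤ n) (hB : B n k p ≠ 0) :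
    p * n - mu n k p = (n - k) * p * b n k p / B n k p := by
  have h := sum_sub_mul_b hk p
  simp only [sub_mul, sum_sub_distrib, mul_assoc, ← mul_sum, ← B_eq_sum_b] at h
  rw [mu_eq_div]
  field_simp
  linear_combination -h

theorem mu_sub_lower (hb : b n k p ≠ 0) (hB : B n k p ≠ 0) :
    mu n k p - (k + 1 - B n k p / b n k p)
      = (∑ i ∈ range (k + 1), (B n k p * b n i p - B n i p * b n k p)) / (b n k p * B n k p) := by
  have h := sum_range_sum_range_succ (b n · p) k
  simp only [← B_eq_sum_b] at h
  rw [mu_eq_div, sum_sub_distrib, ← mul_sum, ← sum_mul, ← B_eq_sum_b, h]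
  field_simp
  ring

end Binomial

theorem partial_mean_bounds
    (k n : ℕ) (hkn : k ≤ n) (p : ℝ) (hp0 : 0 < p) (hp1 : p < 1) :
    ((k : ℝ) + 1 - B n k p / b n k p ≤ mu n k p ∧ mu n k p ≤ p * n) ∧
    ((k : ℝ) + 1 - B n k p / b n k p = mu n k p ↔ k = 0) ∧
    (mu n k p = p * n ↔ k = n) := by
  have hb := b_pos hkn hp0 hp1
  have hB := B_pos hkn hp0 hp1
  have hpos : ∀ i ≤ n, 0 < b n i p := fun i hi => b_pos hi hp0 hp1
  have hlc : ∀ i j, j ≤ i → i < n → b n (i + 1) p * b n j p ≤ b n (j + 1) p * b n i p :=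
    fun _ _ hji hi => b_succ_mul_le hji hi hp0 hp1
  have hnk : (0 : ℝ) ≤ n - k := sub_nonneg.mpr (by exact_mod_cast hkn)
  refine ⟨⟨sub_nonneg.mp ?_, sub_nonneg.mp ?_⟩, ?_, ?_⟩
  · rw [mu_sub_lower hb.ne' hB.ne']
    exact div_nonneg (sum_partialSum_mul_sub_nonneg hpos hlc hkn) (by positivity)
  · rw [mul_sub_mu hkn hB.ne']
    positivity
  · rw [eq_comm, ← sub_eq_zero, mu_sub_lower hb.ne' hB.ne', div_eq_zero_iff,
      or_iff_left (by positivity)]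
    exact sum_partialSum_mul_sub_eq_zero_iff hpos hlc hkn
  · rw [eq_comm, ← sub_eq_zero, mul_sub_mu hkn hB.ne']
    simp [hb.ne', hp0.ne', hB.ne', sub_eq_zero, eq_comm]
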